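/- arXiv:math/0511524 — 2 statements merged into one kernel-verified Lean document; each statement's English description precedes it below -/
import Mathlib

section
/- Let V = ⊕_{j∈ℤ}V_j be a quasifinite 𝒟̂^N-module and let v₀ ∈ V_0 be a nonzero vector with t·v₀ = 0, where t = t¹D⁰I. Then there exists an integer n > 0 such that (𝒟̂^N)_j v₀ = 0 for all j ≥ nN. -/
/-!
Fix `E = E_{pq}` and let `L_m` be the span of the vectors `t^m [D]_j E · v₀` (`j ≥ 0`); it lies in
the finite-dimensional space `V_{mN+p-q}`. Since `t v₀ = 0`, the commutator formula gives
`t · t^m [D]_{j+1} E · v₀ = -(j+1) t^{m+1} [D]_j E · v₀` and `t · t^m E · v₀ = 0`, so `t` maps `L_m`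
onto a space containing `L_{m+1}`. Hence `dim L_m` is nonincreasing, eventually constant, and from
then on `t` is injective on `L_m`; induction on `j` then kills every `t^m [D]_j E · v₀` with `m`
large. An element of degree at least `nN` has `m ≥ n`.
-/

noncomputable section

open scoped BigOperators

/-- Falling factorial `[b]_s = b(b-1)⋯(b-s+1)` of an integer `b`. -/
def dfall (b : ℤ) (s : ℕ) : ℤ := ∏ i ∈ Finset.range s, (b - (i : ℤ))

/-- Generalized binomial coefficient `binom(a, n)` as a complex number, for `a : ℤ`, `n : ℕ`. -/
def cbinom (a : ℤ) (n : ℕ) : ℂ :=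
  (∏ i ∈ Finset.range n, ((a : ℂ) - (i : ℂ))) / (n.factorial : ℂ)

/-- The coefficient `δ_{i,-k} (-1)^j j! l! binom(i+j, j+l+1)` of the central element in the
bracket of `t^a (d/dt)^j A = t^i [D]_j A` (with `a = i + j`) and `t^b (d/dt)^l B = t^k [D]_l B`
(with `b = k + l`); it is still to be multiplied by `tr (AB)`. -/
def cocycleCoeff (a : ℤ) (j : ℕ) (b : ℤ) (l : ℕ) : ℂ :=
  if a + b = (j : ℤ) + (l : ℤ) then
    (-1 : ℂ) ^ j * (j.factorial : ℂ) * (l.factorial : ℂ) * cbinom a (j + l + 1)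
  else 0

/-- A module over the universal central extension `𝒟̂^N` of the Lie algebra of `N × N`-matrix
differential operators on the circle, presented through the action `ρ a j A` of the basis
elements `t^a (d/dt)^j A = t^{a-j} [D]_j A` (`a ∈ ℤ`, `j ∈ ℕ`, `A ∈ gl_N(ℂ)`) together with the
action `cC` of the central element `C`, subject to bilinearity in `A` and the commutation
relations (2.3)/(3.12) of the paper. -/
structure DhatModule (N : ℕ) (V : Type*) [AddCommGroup V] [Module ℂ V] where
  ρ : ℤ → ℕ → Matrix (Fin N) (Fin N) ℂ → Module.End ℂ V
  cC : Module.End ℂ V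
  ρ_add : ∀ a j A B, ρ a j (A + B) = ρ a j A + ρ a j B
  ρ_smul : ∀ a j (c : ℂ) A, ρ a j (c • A) = c • ρ a j A
  cC_comm : ∀ a j A, cC * ρ a j A = ρ a j A * cC
  bracket_rel : ∀ (a : ℤ) (j : ℕ) (A : Matrix (Fin N) (Fin N) ℂ) (b : ℤ) (l : ℕ)
      (B : Matrix (Fin N) (Fin N) ℂ),
    ρ a j A * ρ b l B - ρ b l B * ρ a j A =
      ((∑ s ∈ Finset.range (j + 1),
        ((j.choose s : ℂ) * (dfall b s : ℂ)) • ρ (a + b - (s : ℤ)) (j + l - s) (A * B))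
      - (∑ s ∈ Finset.range (l + 1),
        ((l.choose s : ℂ) * (dfall a s : ℂ)) • ρ (a + b - (s : ℤ)) (j + l - s) (B * A)))
      + (cocycleCoeff a j b l * (A * B).trace) • cC

namespace DhatModule

variable {N : ℕ} {V : Type*} [AddCommGroup V] [Module ℂ V]

/-- A subspace invariant under the `𝒟̂^N`-action. -/
def IsSub (M : DhatModule N V) (U : Submodule ℂ V) : Prop :=
  (∀ a j A, ∀ v ∈ U, M.ρ a j A v ∈ U) ∧ ∀ v ∈ U, M.cC v ∈ U

/-- The module is trivial: `𝒟̂^N` acts by zero. -/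
def IsTrivial (M : DhatModule N V) : Prop :=
  (∀ a j A (v : V), M.ρ a j A v = 0) ∧ ∀ v : V, M.cC v = 0

/-- Irreducibility: the module is nonzero and has no invariant subspace besides `⊥` and `⊤`. -/
def IsIrreducible (M : DhatModule N V) : Prop :=
  (⊥ : Submodule ℂ V) ≠ ⊤ ∧ ∀ U : Submodule ℂ V, M.IsSub U → U = ⊥ ∨ U = ⊤

/-- Indecomposability: the module is nonzero and is not the direct sum of two nonzero
invariant subspaces. -/
def IsIndecomposable (M : DhatModule N V) : Prop :=
  (⊥ : Submodule ℂ V) ≠ ⊤ ∧ ∀ U W : Submodule ℂ V, M.IsSub U → M.IsSub W →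
    U ⊓ W = ⊥ → U ⊔ W = ⊤ → U = ⊥ ∨ W = ⊥

end DhatModule

/-- The degree of the basis element `t^a (d/dt)^j E_{p,q} = t^{a-j} [D]_j E_{p,q}` in the
principal `ℤ`-gradation of `𝒟̂^N`, namely `(a - j) N + p - q` (here `p, q ∈ Fin N` correspond
to `p+1, q+1 ∈ [1,N]`). -/
def gdeg (N : ℕ) (a : ℤ) (j : ℕ) (p q : Fin N) : ℤ :=
  (a - (j : ℤ)) * (N : ℤ) + (p.val : ℤ) - (q.val : ℤ)

/-- A `ℤ`-graded `𝒟̂^N`-module, graded compatibly with the principal gradation of `𝒟̂^N`. -/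
structure GradedDhatModule (N : ℕ) (V : Type*) [AddCommGroup V] [Module ℂ V]
    extends DhatModule N V where
  grade : ℤ → Submodule ℂ V
  isInternal : DirectSum.IsInternal grade
  grade_ρ : ∀ (a : ℤ) (j : ℕ) (p q : Fin N) (d : ℤ), ∀ v ∈ grade d,
    ρ a j (Matrix.single p q 1) v ∈ grade (d + gdeg N a j p q)
  grade_cC : ∀ (d : ℤ), ∀ v ∈ grade d, cC v ∈ grade d

namespace GradedDhatModule

variable {N : ℕ} {V : Type*} [AddCommGroup V] [Module ℂ V]

/-- Quasifiniteness: every graded component is finite-dimensional. -/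
def IsQuasifinite (G : GradedDhatModule N V) : Prop :=
  ∀ d : ℤ, FiniteDimensional ℂ (G.grade d)

/-- Uniformly bounded: the dimensions of the graded components are uniformly bounded. -/
def IsUniformlyBounded (G : GradedDhatModule N V) : Prop :=
  ∃ K : ℕ, ∀ d : ℤ, Module.rank ℂ (G.grade d) ≤ (K : Cardinal)

/-- Module of the intermediate series: all graded components have dimension at most `1`. -/
def IsIntermediateSeries (G : GradedDhatModule N V) : Prop :=
  ∀ d : ℤ, Module.rank ℂ (G.grade d) ≤ 1

/-- A highest weight vector: homogeneous, nonzero, with `(𝒟̂^N)₀ v ⊆ ℂ v` and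
`(𝒟̂^N)₊ v = 0`. -/
def IsHWVector (G : GradedDhatModule N V) (v : V) : Prop :=
  v ≠ 0 ∧ (∃ d : ℤ, v ∈ G.grade d) ∧
  (∀ (a : ℤ) (j : ℕ) (p q : Fin N), gdeg N a j p q = 0 →
    ∃ c : ℂ, G.ρ a j (Matrix.single p q 1) v = c • v) ∧
  (∃ c : ℂ, G.cC v = c • v) ∧
  (∀ (a : ℤ) (j : ℕ) (p q : Fin N), 0 < gdeg N a j p q →
    G.ρ a j (Matrix.single p q 1) v = 0)

/-- A lowest weight vector: homogeneous, nonzero, with `(𝒟̂^N)₀ v ⊆ ℂ v` and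
`(𝒟̂^N)₋ v = 0`. -/
def IsLWVector (G : GradedDhatModule N V) (v : V) : Prop :=
  v ≠ 0 ∧ (∃ d : ℤ, v ∈ G.grade d) ∧
  (∀ (a : ℤ) (j : ℕ) (p q : Fin N), gdeg N a j p q = 0 →
    ∃ c : ℂ, G.ρ a j (Matrix.single p q 1) v = c • v) ∧
  (∃ c : ℂ, G.cC v = c • v) ∧
  (∀ (a : ℤ) (j : ℕ) (p q : Fin N), gdeg N a j p q < 0 →
    G.ρ a j (Matrix.single p q 1) v = 0)

/-- A highest weight module: generated by a highest weight vector. -/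
def IsHWModule (G : GradedDhatModule N V) : Prop :=
  ∃ v : V, G.IsHWVector v ∧
    ∀ U : Submodule ℂ V, G.toDhatModule.IsSub U → v ∈ U → U = ⊤

/-- A lowest weight module: generated by a lowest weight vector. -/
def IsLWModule (G : GradedDhatModule N V) : Prop :=
  ∃ v : V, G.IsLWVector v ∧
    ∀ U : Submodule ℂ V, G.toDhatModule.IsSub U → v ∈ U → U = ⊤

end GradedDhatModule

open Module

theorem LinearMap.disjoint_ker_of_finrank_le_finrank_map {K V W : Type*} [DivisionRing K]
    [AddCommGroup V] [Module K V] [AddCommGroup W] [Module K W] (T : V →ₗ[K] W)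
    {U : Submodule K V} [FiniteDimensional K U] (h : finrank K U ≤ finrank K (U.map T)) :
    Disjoint U (LinearMap.ker T) := by
  have hrank := (T.domRestrict U).finrank_range_add_finrank_ker
  rw [LinearMap.range_domRestrict] at hrank
  have hker : LinearMap.ker (T.domRestrict U) = ⊥ := Submodule.finrank_eq_zero.1 (by omega)
  refine Submodule.disjoint_def.2 fun x hx hxT => ?_
  have hx' : (⟨x, hx⟩ : U) ∈ LinearMap.ker (T.domRestrict U) := by simpa using hxT
  simpa [hker] using hx'

theorem LinearMap.exists_disjoint_ker_of_le_map {K V : Type*} [DivisionRing K]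
    [AddCommGroup V] [Module K V] (T : V →ₗ[K] V) (U : ℕ → Submodule K V)
    [∀ m, FiniteDimensional K (U m)] (hU : ∀ m, U (m + 1) ≤ (U m).map T) :
    ∃ m₀, ∀ m, m₀ ≤ m → Disjoint (U m) (LinearMap.ker T) := by
  have hle (m : ℕ) : finrank K (U (m + 1)) ≤ finrank K ((U m).map T) :=
    Submodule.finrank_mono (hU m)
  have hanti : Antitone fun m => finrank K (U m) :=
    antitone_nat_of_succ_le fun m => (hle m).trans (Submodule.finrank_map_le T (U m))
  obtain ⟨m₀, hm₀⟩ := WellFoundedGT.monotone_chain_condition (α := ℕᵒᵈ)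
    ⟨fun m => OrderDual.toDual (finrank K (U m)), hanti⟩
  refine ⟨m₀, fun m hm => T.disjoint_ker_of_finrank_le_finrank_map ?_⟩
  have h₁ : finrank K (U m₀) = finrank K (U m) := hm₀ m hm
  have h₂ : finrank K (U m₀) = finrank K (U (m + 1)) := hm₀ (m + 1) (by omega)
  exact (h₁.symm.trans h₂).le.trans (hle m)

theorem dfall_one_eq_zero {s : ℕ} (hs : 2 ≤ s) : dfall 1 s = 0 :=
  Finset.prod_eq_zero (i := 1) (Finset.mem_range.2 hs) (by simp)

theorem sum_range_choose_mul_dfall_one_smul {M : Type*} [AddCommGroup M] [Module ℂ M]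
    (l : ℕ) (f : ℕ → M) :
    ∑ s ∈ Finset.range (l + 1), ((l.choose s : ℂ) * (dfall 1 s : ℂ)) • f s
      = f 0 + (l : ℂ) • f 1 := by
  cases l with
  | zero => simp [dfall]
  | succ k =>
    rw [Finset.sum_range_succ', Finset.sum_range_succ', Finset.sum_eq_zero fun s _ => by
      rw [dfall_one_eq_zero (by omega)]; simp]
    simp [dfall, add_comm]

namespace DhatModule

variable {N : ℕ} {V : Type*} [AddCommGroup V] [Module ℂ V] (M : DhatModule N V)

abbrev t : Module.End ℂ V := M.ρ 1 0 1

theorem t_commutator (b : ℤ) (l : ℕ) (B : Matrix (Fin N) (Fin N) ℂ) (hb : 1 + b ≠ l) :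
    M.t * M.ρ b l B - M.ρ b l B * M.t = (-(l : ℂ)) • M.ρ b (l - 1) B := by
  have hc : cocycleCoeff 1 0 b l = 0 := if_neg (by omega)
  rw [t, M.bracket_rel, hc, sum_range_choose_mul_dfall_one_smul]
  simp [dfall]

theorem t_ρ_apply {v : V} (hv : M.t v = 0) {b : ℤ} {l : ℕ} (B : Matrix (Fin N) (Fin N) ℂ)
    (hb : 1 + b ≠ l) : M.t (M.ρ b l B v) = (-(l : ℂ)) • M.ρ b (l - 1) B v := by
  simpa [hv] using LinearMap.congr_fun (M.t_commutator b l B hb) v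

/-- `M.layer B v m` is `t^m ℂ[D] B · v`, as `ρ (m + j) j B = t^m [D]_j B`. -/
def layer (B : Matrix (Fin N) (Fin N) ℂ) (v : V) (m : ℕ) : Submodule ℂ V :=
  Submodule.span ℂ (Set.range fun j : ℕ => M.ρ (m + j) j B v)

variable {M} {v : V}

theorem t_ρ_succ_apply (hv : M.t v = 0) (B : Matrix (Fin N) (Fin N) ℂ) (m j : ℕ) :
    M.t (M.ρ (m + (j + 1 : ℕ)) (j + 1) B v) = (-(j + 1 : ℂ)) • M.ρ ((m + 1 : ℕ) + j) j B v := by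
  rw [M.t_ρ_apply hv B (by omega)]
  push_cast
  ring_nf

theorem layer_succ_le_map_t (hv : M.t v = 0) (B : Matrix (Fin N) (Fin N) ℂ) (m : ℕ) :
    M.layer B v (m + 1) ≤ (M.layer B v m).map M.t := by
  refine Submodule.span_le.2 ?_
  rintro _ ⟨j, rfl⟩
  have hj : -(j + 1 : ℂ) ≠ 0 := neg_ne_zero.2 (Nat.cast_add_one_ne_zero j)
  refine ⟨(-(j + 1 : ℂ))⁻¹ • M.ρ (m + (j + 1 : ℕ)) (j + 1) B v,
    Submodule.smul_mem _ _ (Submodule.subset_span ⟨j + 1, rfl⟩), ?_⟩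
  simp only [map_smul, t_ρ_succ_apply hv, smul_smul, inv_mul_cancel₀ hj, one_smul]

theorem exists_ρ_eq_zero_of_t_eq_zero (hv : M.t v = 0) (B : Matrix (Fin N) (Fin N) ℂ)
    [∀ m, FiniteDimensional ℂ (M.layer B v m)] :
    ∃ m₀ : ℕ, ∀ m, m₀ ≤ m → ∀ j : ℕ, M.ρ (m + j) j B v = 0 := by
  obtain ⟨m₀, hm₀⟩ := M.t.exists_disjoint_ker_of_le_map (M.layer B v) (layer_succ_le_map_t hv B)
  have hinj (m : ℕ) (hm : m₀ ≤ m) (j : ℕ) (h : M.t (M.ρ (m + j) j B v) = 0) :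
      M.ρ (m + j) j B v = 0 :=
    Submodule.disjoint_def.1 (hm₀ m hm) _ (Submodule.subset_span ⟨j, rfl⟩) h
  refine ⟨m₀, fun m hm j => ?_⟩
  induction j generalizing m with
  | zero => exact hinj m hm 0 (by simpa using M.t_ρ_apply hv B (l := 0) (by omega))
  | succ j ih => exact hinj m hm (j + 1) (by rw [t_ρ_succ_apply hv, ih (m + 1) (by omega), smul_zero])

end DhatModule

theorem gdeg_lt (N : ℕ) (a : ℤ) (j : ℕ) (p q : Fin N) : gdeg N a j p q < (a - j + 1) * N := by
  have hp : (p : ℤ) < N := by exact_mod_cast p.isLt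
  have hq : (0 : ℤ) ≤ q := by positivity
  rw [gdeg]
  linarith

namespace GradedDhatModule

variable {N : ℕ} {V : Type*} [AddCommGroup V] [Module ℂ V] (G : GradedDhatModule N V) {v : V}

theorem layer_le_grade (hv : v ∈ G.grade 0) (p q : Fin N) (m : ℕ) :
    G.layer (Matrix.single p q 1) v m ≤ G.grade (m * N + p - q) := by
  refine Submodule.span_le.2 ?_
  rintro _ ⟨j, rfl⟩
  have h := G.grade_ρ (m + j) j p q 0 v hv
  rwa [gdeg, show (0 : ℤ) + ((m + j - j) * N + p - q) = m * N + p - q by ring] at h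

theorem finiteDimensional_layer (hqf : G.IsQuasifinite) (hv : v ∈ G.grade 0) (p q : Fin N)
    (m : ℕ) : FiniteDimensional ℂ (G.layer (Matrix.single p q 1) v m) :=
  haveI := hqf (m * N + p - q)
  Submodule.finiteDimensional_of_le (G.layer_le_grade hv p q m)

end GradedDhatModule

theorem killed_by_t_implies_killed_by_high_degree_general (N : ℕ)
    (V : Type*) [AddCommGroup V] [Module ℂ V]
    (G : GradedDhatModule N V) (hqf : G.IsQuasifinite)
    (v₀ : V) (hv₀ : v₀ ∈ G.grade 0) (ht : G.ρ 1 0 1 v₀ = 0) :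
    ∃ n : ℕ, 0 < n ∧ ∀ (a : ℤ) (j : ℕ) (p q : Fin N),
      ((n : ℤ) * (N : ℤ)) ≤ gdeg N a j p q →
      G.ρ a j (Matrix.single p q 1) v₀ = 0 := by
  have := G.finiteDimensional_layer hqf hv₀
  choose m₀ hm₀ using fun p q : Fin N =>
    G.exists_ρ_eq_zero_of_t_eq_zero ht (Matrix.single p q 1)
  set m₁ := Finset.univ.sup fun pq : Fin N × Fin N => m₀ pq.1 pq.2
  refine ⟨m₁ + 1, m₁.succ_pos, fun a j p q hdeg => ?_⟩
  have hn : ((m₁ + 1 : ℕ) : ℤ) < a - j + 1 :=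
    lt_of_mul_lt_mul_right (hdeg.trans_lt (gdeg_lt N a j p q)) (by positivity)
  obtain ⟨m, rfl⟩ : ∃ m : ℕ, a = m + j := ⟨(a - j).toNat, by omega⟩
  have hm : m₀ p q ≤ m₁ := Finset.le_sup (f := fun pq : Fin N × Fin N => m₀ pq.1 pq.2)
    (Finset.mem_univ (p, q))
  exact hm₀ p q m (by omega) j

/-- If `V` is a quasifinite `𝒟̂^N`-module and `v₀ ∈ V₀` is a nonzero vector with `t v₀ = 0`
(where `t = t¹D⁰I`), then there is an integer `n > 0` such that `(𝒟̂^N)_j v₀ = 0` for all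
`j ≥ nN`. -/
theorem killed_by_t_implies_killed_by_high_degree (N : ℕ) (hN : 1 ≤ N)
    (V : Type*) [AddCommGroup V] [Module ℂ V]
    (G : GradedDhatModule N V) (hqf : G.IsQuasifinite)
    (v₀ : V) (hv₀ : v₀ ∈ G.grade 0) (hne : v₀ ≠ 0) (ht : G.ρ 1 0 1 v₀ = 0) :
    ∃ n : ℕ, 0 < n ∧ ∀ (a : ℤ) (j : ℕ) (p q : Fin N),
      ((n : ℤ) * (N : ℤ)) ≤ gdeg N a j p q →
      G.ρ a j (Matrix.single p q 1) v₀ = 0 :=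
  killed_by_t_implies_killed_by_high_degree_general N V G hqf v₀ hv₀ ht
end
end

section
/- For every integer j > 0, writing j = kN + s with k ≥ 0 and 0 ≤ s < N, the graded component (𝒟̂^N)_j of the principal ℤ-gradation satisfies (𝒟̂^N)_j ⊆ (ad t)^k((𝒟̂^N)_{[0,N)}), where (𝒟̂^N)_{[0,N)} = ⊕_{0 ≤ i < N}(𝒟̂^N)_i and t = t¹D⁰I. In particular the positive part (𝒟̂^N)_+ is generated by the adjoint action of t on (𝒟̂^N)_{[0,N)}. -/
noncomputable section

open scoped BigOperators

/-- The underlying space `ℂ^N[t,t⁻¹]`; the coefficient of `t^k` is stored at index `k`. -/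
abbrev MN (N : ℕ) : Type := ℤ →₀ (Fin N → ℂ)

/-- The operator `t^i D^j A` on `ℂ^N[t,t⁻¹]` (where `D = t d/dt`):
`t^i D^j A ⬝ (t^k v) = k^j t^{i+k} (A v)`.  This realizes `𝒟^N` faithfully as operators. -/
def gen (N : ℕ) (i : ℤ) (j : ℕ) (A : Matrix (Fin N) (Fin N) ℂ) : Module.End ℂ (MN N) :=
  Finsupp.lsum ℂ fun k : ℤ => (Finsupp.lsingle (k + i)) ∘ₗ (((k : ℂ) ^ j) • A.mulVecLin)

/-- The linear functional `x ↦ ψ(t, x)` on operators, where `ψ` is the `2`-cocycle defining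
`𝒟̂^N`: it extracts `tr A` from the `t^{-1} D^0 A` component of `x`. -/
def tauL (N : ℕ) : Module.End ℂ (MN N) →ₗ[ℂ] ℂ :=
  ∑ p : Fin N,
    ((LinearMap.proj p : (Fin N → ℂ) →ₗ[ℂ] ℂ) ∘ₗ
      (Finsupp.lapply (-1 : ℤ) : MN N →ₗ[ℂ] (Fin N → ℂ)) ∘ₗ
      (LinearMap.applyₗ (Finsupp.single (0 : ℤ) (Pi.single p 1)) :
        Module.End ℂ (MN N) →ₗ[ℂ] MN N))

attribute [local instance 100] LieRing.ofAssociativeRing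

/-- The adjoint action `ad t` of `t = t¹D⁰I` on `𝒟̂^N = 𝒟^N ⊕ ℂ C`, realized on
`(operators) × ℂ`:  `ad t (x, c) = ([t, x], ψ(t, x))`. -/
def adt (N : ℕ) : Module.End ℂ (Module.End ℂ (MN N) × ℂ) :=
  LinearMap.prod
    ((LieAlgebra.ad ℂ (Module.End ℂ (MN N)) (gen N 1 0 1)) ∘ₗ
      LinearMap.fst ℂ (Module.End ℂ (MN N)) ℂ)
    ((tauL N) ∘ₗ LinearMap.fst ℂ (Module.End ℂ (MN N)) ℂ)

/-- The graded component of degree `d` of the principal `ℤ`-gradation of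
`𝒟̂^N = 𝒟^N ⊕ ℂ C`, spanned by the `t^k D^j E_{p,q}` with `kN + p - q = d`, together with
the central element `C` in degree `0`. -/
def DhatGrade (N : ℕ) (d : ℤ) : Submodule ℂ (Module.End ℂ (MN N) × ℂ) :=
  Submodule.span ℂ
    ({z : Module.End ℂ (MN N) × ℂ | ∃ (k : ℤ) (j : ℕ) (p q : Fin N),
        k * (N : ℤ) + (p.val : ℤ) - (q.val : ℤ) = d ∧
        z = (gen N k j (Matrix.single p q 1), (0 : ℂ))} ∪
      (if d = 0 then {((0 : Module.End ℂ (MN N)), (1 : ℂ))} else (∅ : Set _)))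

/-- `(𝒟̂^N)_{[0,N)}`: the sum of the graded components of degrees `0 ≤ d < N`. -/
def DhatLow (N : ℕ) : Submodule ℂ (Module.End ℂ (MN N) × ℂ) :=
  ⨆ d ∈ Finset.Ico (0 : ℤ) (N : ℤ), DhatGrade N d

/-! Since `D (t^k v) = k t^k v`, one has `[t, t^m D^j A] = t^{m+1} (D^j - (D+1)^j) A
= -∑_{l<j} binom(j,l) t^{m+1} D^l A`, whose top coefficient `-j` is nonzero for `j ≥ 1`, while the
cocycle term `ψ(t, t^m D^j A)` vanishes for `j ≥ 1`. By induction on `l`, the image under `ad t` of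
the span of the `t^m D^j A` therefore contains every `t^{m+1} D^l A`, so `ad t` maps `(𝒟̂^N)_d`
onto `(𝒟̂^N)_{d+N}` as long as `d + N ≠ 0` (the central element lives in degree `0` only).
Iterating this `k` times from `(𝒟̂^N)_s ⊆ (𝒟̂^N)_{[0,N)}` gives the claim. -/

section

variable {N : ℕ}

@[simp]
lemma gen_single (i : ℤ) (j : ℕ) (A : Matrix (Fin N) (Fin N) ℂ) (k : ℤ) (v : Fin N → ℂ) :
    gen N i j A (Finsupp.single k v) = Finsupp.single (k + i) (((k : ℂ) ^ j) • A.mulVec v) := by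
  simp only [gen, Finsupp.lsum_single, LinearMap.comp_apply, LinearMap.smul_apply,
    Matrix.mulVecLin_apply, Finsupp.lsingle_apply]

lemma tauL_gen_succ (m : ℤ) (j : ℕ) (A : Matrix (Fin N) (Fin N) ℂ) :
    tauL N (gen N m (j + 1) A) = 0 := by
  simp [tauL]

lemma lie_gen_one_gen (m : ℤ) (j : ℕ) (A : Matrix (Fin N) (Fin N) ℂ) :
    ⁅gen N 1 0 1, gen N m j A⁆ =
      -∑ l ∈ Finset.range j, (j.choose l : ℂ) • gen N (m + 1) l A := by
  have binomial (k : ℂ) :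
      k ^ j - (k + 1) ^ j = -∑ l ∈ Finset.range j, (j.choose l : ℂ) * k ^ l := by
    simp [add_pow, Finset.sum_range_succ, mul_comm]
  rw [show ⁅gen N 1 0 1, gen N m j A⁆ = gen N 1 0 1 * gen N m j A - gen N m j A * gen N 1 0 1
    from rfl]
  apply Finsupp.lhom_ext
  intro k v
  simp only [LinearMap.sub_apply, Module.End.mul_apply, LinearMap.neg_apply,
    LinearMap.sum_apply, LinearMap.smul_apply, gen_single, pow_zero, one_smul,
    Matrix.one_mulVec, Matrix.mulVec_smul, Int.cast_add, Int.cast_one, Finsupp.smul_single,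
    smul_smul]
  rw [add_right_comm k 1 m, ← Finsupp.single_sub, ← sub_smul, one_mul, binomial, neg_smul,
    Finset.sum_smul, Finsupp.single_neg, Finsupp.single_finsetSum, add_assoc]

lemma adt_gen_succ (m : ℤ) (j : ℕ) (A : Matrix (Fin N) (Fin N) ℂ) :
    adt N (gen N m (j + 1) A, 0) =
      -∑ l ∈ Finset.range (j + 1), ((j + 1).choose l : ℂ) • (gen N (m + 1) l A, (0 : ℂ)) := by
  change (⁅gen N 1 0 1, gen N m (j + 1) A⁆, tauL N (gen N m (j + 1) A)) = _
  rw [tauL_gen_succ, lie_gen_one_gen]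
  ext1 <;> simp [Prod.fst_sum, Prod.snd_sum]

lemma gen_mem_map_adt_span (m : ℤ) (A : Matrix (Fin N) (Fin N) ℂ) (j : ℕ) :
    (gen N (m + 1) j A, (0 : ℂ)) ∈
      (Submodule.span ℂ (Set.range fun j' : ℕ => (gen N m j' A, (0 : ℂ)))).map (adt N) := by
  induction j using Nat.strong_induction_on with
  | _ j ih =>
    set S := (Submodule.span ℂ (Set.range fun j' : ℕ => (gen N m j' A, (0 : ℂ)))).map (adt N)
    have top_coeff : (-((j : ℂ) + 1)) • (gen N (m + 1) j A, (0 : ℂ)) =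
        adt N (gen N m (j + 1) A, 0) +
          ∑ l ∈ Finset.range j, ((j + 1).choose l : ℂ) • (gen N (m + 1) l A, (0 : ℂ)) := by
      rw [adt_gen_succ, Finset.sum_range_succ, Nat.choose_succ_self_right]
      push_cast
      module
    have hscaled : (-((j : ℂ) + 1)) • (gen N (m + 1) j A, (0 : ℂ)) ∈ S := by
      rw [top_coeff]
      exact add_mem (Submodule.mem_map_of_mem (Submodule.subset_span ⟨j + 1, rfl⟩))
        (sum_mem fun l hl => S.smul_mem _ (ih l (Finset.mem_range.mp hl)))
    exact (S.smul_mem_iff (neg_ne_zero.mpr (Nat.cast_add_one_ne_zero j))).mp hscaled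

lemma DhatGrade_add_le_map_adt (d : ℤ) (hd : d + N ≠ 0) :
    DhatGrade N (d + N) ≤ (DhatGrade N d).map (adt N) := by
  rw [DhatGrade, Submodule.span_le]
  rintro z (⟨k, j, p, q, hdeg, rfl⟩ | hz)
  · have hmem := gen_mem_map_adt_span (k - 1) (Matrix.single p q 1) j
    rw [sub_add_cancel] at hmem
    refine Submodule.map_mono ?_ hmem
    rw [Submodule.span_le]
    rintro _ ⟨j', rfl⟩
    exact Submodule.subset_span (Or.inl ⟨k - 1, j', p, q, by linarith, rfl⟩)
  · simp [hd] at hz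

lemma DhatGrade_le_map_adt_pow (hN : 0 < N) (k : ℕ) (s : ℤ) (hs : 0 ≤ s) :
    DhatGrade N (k * N + s) ≤ (DhatGrade N s).map (adt N ^ k) := by
  induction k with
  | zero => simp [Module.End.one_eq_id]
  | succ k ih =>
    calc DhatGrade N ((k + 1 : ℕ) * N + s)
        = DhatGrade N ((k * N + s) + N) := by push_cast; ring_nf
      _ ≤ (DhatGrade N (k * N + s)).map (adt N) :=
          DhatGrade_add_le_map_adt _ (by positivity)
      _ ≤ ((DhatGrade N s).map (adt N ^ k)).map (adt N) := Submodule.map_mono ih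
      _ = (DhatGrade N s).map (adt N ^ (k + 1)) := by
          rw [pow_succ', Module.End.mul_eq_comp, Submodule.map_comp]

lemma DhatGrade_le_DhatLow (s : ℤ) (h0 : 0 ≤ s) (h1 : s < N) : DhatGrade N s ≤ DhatLow N :=
  le_iSup₂ (f := fun d _ => DhatGrade N d) s (Finset.mem_Ico.mpr ⟨h0, h1⟩)

end

/-- For every integer `d > 0`, writing `d = kN + s` with `k ≥ 0` and `0 ≤ s < N`, one has
`(𝒟̂^N)_d ⊆ (ad t)^k ((𝒟̂^N)_{[0,N)})`.  In particular the positive part of `𝒟̂^N` is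
generated by the adjoint action of `t = t¹D⁰I` on `(𝒟̂^N)_{[0,N)}`. -/
theorem positive_part_generated_by_adt (N : ℕ) (hN : 1 ≤ N) :
    (∀ d : ℤ, 0 < d → ∀ (k s : ℕ), (s : ℤ) < (N : ℤ) → d = (k : ℤ) * (N : ℤ) + (s : ℤ) →
      DhatGrade N d ≤ Submodule.map ((adt N) ^ k) (DhatLow N)) ∧
    (∀ d : ℤ, 0 < d →
      DhatGrade N d ≤ ⨆ k : ℕ, Submodule.map ((adt N) ^ k) (DhatLow N)) := by
  have graded : ∀ d : ℤ, 0 < d → ∀ (k s : ℕ), (s : ℤ) < N → d = k * N + s →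
      DhatGrade N d ≤ (DhatLow N).map (adt N ^ k) := by
    rintro d - k s hs rfl
    exact (DhatGrade_le_map_adt_pow hN k s s.cast_nonneg).trans
      (Submodule.map_mono (DhatGrade_le_DhatLow s s.cast_nonneg hs))
  refine ⟨graded, fun d hd => ?_⟩
  lift d to ℕ using hd.le
  have hdecomp : (d : ℤ) = (d / N : ℕ) * N + (d % N : ℕ) := by
    exact_mod_cast (Nat.div_add_mod' d N).symm
  exact (graded d hd _ _ (by exact_mod_cast Nat.mod_lt d hN) hdecomp).trans
    (le_iSup (fun k => (DhatLow N).map (adt N ^ k)) _)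
end
end
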